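/- Let n ≥ 2, q ∈ [0,1], and let P_q be the top-or-bottom-to-random transition matrix on S_n. Define f : S_n → ℝ by f(σ) = Σ_{i ∈ Des(σ)} C(n−2, i−1)·q^{i−1}·(1−q)^{n−1−i}. Then for every integer t ≥ 0, the entry of the vector P_q^t · f at the identity permutation equals (1 − ((n−2)/n)^t)·(1/2). (In words: starting from an ascendingly ordered deck, the expected value of the weighted descent statistic f after t top-or-bottom-to-random shuffles is (1 − ((n−2)/n)^t)/2.) -/

import Mathlib

open Finset

/-- 0-indexed descent set of a deck arrangement: `i ∈ desSet n σ` iff the card at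
position `i` is greater than the card at position `i+1` (positions `0, …, n-2`). -/
def desSet (n : ℕ) (σ : Equiv.Perm (Fin n)) : Finset ℕ :=
  (Finset.range (n - 1)).filter
    (fun i => ∃ h : i + 1 < n, σ ⟨i + 1, h⟩ < σ ⟨i, Nat.lt_of_succ_lt h⟩)

/-- `des σ` is the number of descents of `σ`. -/
def des (n : ℕ) (σ : Equiv.Perm (Fin n)) : ℕ := (desSet n σ).card

/-- the cycle `e_i` (0-indexed): sends `j ↦ j-1` for `j > i`, `i ↦ n-1`, fixes `j < i`.
(`Fin.cycleRange i` is the cycle `c_i` (0-indexed): sends `j ↦ j+1` for `j < i`,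
`i ↦ 0`, fixes `j > i`.) -/
def botCycle (n : ℕ) (i : Fin n) : Equiv.Perm (Fin n) :=
  Fin.revPerm * Fin.cycleRange i.rev * Fin.revPerm

/-- top-or-bottom-to-random transition matrix with parameter `q`:
with probability `q` remove the top card and reinsert it at a uniform position,
otherwise do the same with the bottom card. -/
noncomputable def Pq (n : ℕ) (q : ℝ) : Matrix (Equiv.Perm (Fin n)) (Equiv.Perm (Fin n)) ℝ :=
  fun σ τ =>
    q / n * ((Finset.univ.filter (fun i : Fin n => τ = σ * Fin.cycleRange i)).card : ℝ) +
    (1 - q) / n * ((Finset.univ.filter (fun i : Fin n => τ = σ * botCycle n i)).card : ℝ)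

/-- weighted descent statistic `f(σ) = Σ_{j ∈ Des(σ)} C(n-2,j) q^j (1-q)^{n-2-j}`
(0-indexed version of `Σ_{i ∈ Des(σ)} C(n-2,i-1) q^{i-1} (1-q)^{n-1-i}`). -/
noncomputable def fdes (n : ℕ) (q : ℝ) (σ : Equiv.Perm (Fin n)) : ℝ :=
  ∑ j ∈ desSet n σ, ((n - 2).choose j : ℝ) * q ^ j * (1 - q) ^ (n - 2 - j)

/-!
Write `m = n - 2`, `r = m / n` and `w_j = C(m, j) q^j (1 - q)^(m - j)`. The statistic
`f = fdes n q` is an affine eigenfunction: `P_q f = r f + 1 / n`. Inserting the top card at each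
of the `n` positions turns the descent indicator `d_j` at position `j` into
`j d_j + 1 + (m - j) d_{j+1}` in total, and the bottom card gives `j d_{j-1} + 1 + (m - j) d_j`.
The identity `q (m - j) w_j = (1 - q) (j + 1) w_{j+1}` moves the shifted terms back onto `d_j`,
so `q · (top sum) + (1 - q) · (bottom sum) = m f + 1`. Since `P_q` is stochastic,
`P_q^t f = r^t f + (1 - r^t) / 2`, and `f` vanishes on the sorted deck.
-/

namespace Matrix

theorem pow_mulVec_eq_of_mulVec_eq_smul_add {ι R : Type*} [Fintype ι] [DecidableEq ι]
    [CommRing R] {P : Matrix ι ι R} {f : ι → R} {r a : R} (h1 : P *ᵥ 1 = 1)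
    (hf : P *ᵥ f = r • f + ((1 - r) * a) • 1) (t : ℕ) :
    (P ^ t) *ᵥ f = r ^ t • f + ((1 - r ^ t) * a) • 1 := by
  induction t with
  | zero => simp
  | succ t ih =>
    rw [pow_succ', ← mulVec_mulVec, ih, mulVec_add, mulVec_smul, mulVec_smul, hf, h1]
    module

end Matrix

open Matrix

theorem Fin.sum_ite_lt_eq_eq_succ {M : Type*} [AddCommMonoid M] (a b c d : M) {j N : ℕ}
    (h : j + 2 ≤ N) :
    ∑ i : Fin N, (if (i : ℕ) < j then a else if (i : ℕ) = j then b
      else if (i : ℕ) = j + 1 then c else d) = j • a + b + c + (N - (j + 2)) • d := by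
  obtain ⟨k, rfl⟩ := Nat.exists_eq_add_of_le h
  have htail : ∀ x ∈ range k, (if j + 2 + x < j then a else if j + 2 + x = j then b
      else if j + 2 + x = j + 1 then c else d) = d := fun x _ => by
    split_ifs <;> first | rfl | omega
  rw [Fin.sum_univ_eq_sum_range (fun i => if i < j then a else if i = j then b
      else if i = j + 1 then c else d), sum_range_add, sum_range_succ, sum_range_succ,
    sum_congr rfl fun i hi => if_pos (mem_range.mp hi), sum_congr rfl htail]
  simp

theorem ite_lt_add_ite_lt_of_ne {α R : Type*} [LinearOrder α] [AddMonoidWithOne R] {a b : α}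
    (h : a ≠ b) : (if a < b then (1 : R) else 0) + (if b < a then 1 else 0) = 1 := by
  rcases h.lt_or_gt with h | h <;> simp [h, h.not_gt]

section Deck

variable {n : ℕ}

/-- Positions past the bottom read as card `n`, larger than every card, so no descent is
recorded there and `descent σ j` is meaningful for every `j : ℕ`. -/
def cardAt (σ : Equiv.Perm (Fin n)) (p : ℕ) : ℕ :=
  if h : p < n then σ ⟨p, h⟩ else n

noncomputable def descent (σ : Equiv.Perm (Fin n)) (j : ℕ) : ℝ :=
  if cardAt σ (j + 1) < cardAt σ j then 1 else 0

theorem mem_desSet_iff {σ : Equiv.Perm (Fin n)} {j : ℕ} :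
    j ∈ desSet n σ ↔ cardAt σ (j + 1) < cardAt σ j := by
  by_cases hj : j + 1 < n
  · rw [desSet, mem_filter, mem_range]
    simp only [cardAt, dif_pos hj, dif_pos (Nat.lt_of_succ_lt hj)]
    exact ⟨fun ⟨_, _, h⟩ => h, fun h => ⟨by omega, hj, h⟩⟩
  · have hlast : ¬ cardAt σ (j + 1) < cardAt σ j := by
      unfold cardAt
      split_ifs <;> omega
    simp only [desSet, mem_filter, mem_range, hlast, iff_false, not_and]
    omega

theorem cardAt_injOn (σ : Equiv.Perm (Fin n)) : Set.InjOn (cardAt σ) (Set.Iio n) := by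
  intro p hp p' hp' h
  simp only [Set.mem_Iio] at hp hp'
  simpa [cardAt, hp, hp', Fin.val_inj] using h

theorem cardAt_mul (σ π : Equiv.Perm (Fin n)) {p : ℕ} (hp : p < n) :
    cardAt (σ * π) p = cardAt σ (π ⟨p, hp⟩) := by
  simp [cardAt, hp]

theorem val_cycleRange_apply (i p : Fin n) :
    (Fin.cycleRange i p : ℕ) =
      if (p : ℕ) < i then (p : ℕ) + 1 else if (p : ℕ) = i then 0 else (p : ℕ) := by
  rcases lt_trichotomy p i with h | rfl | h
  · simp [Fin.coe_cycleRange_of_lt h, Fin.lt_def.mp h]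
  · have : NeZero n := ⟨by rintro rfl; exact p.elim0⟩
    simp
  · simp [Fin.cycleRange_of_gt h, (Fin.lt_def.mp h).not_gt, (Fin.lt_def.mp h).ne']

theorem val_botCycle_apply (i p : Fin n) :
    (botCycle n i p : ℕ) =
      if (p : ℕ) < i then (p : ℕ) else if (p : ℕ) = i then n - 1 else (p : ℕ) - 1 := by
  simp only [botCycle, Equiv.Perm.mul_apply, Fin.revPerm_apply, Fin.val_rev,
    val_cycleRange_apply]
  split_ifs <;> omega

theorem descent_mul_cycleRange (σ : Equiv.Perm (Fin n)) (i : Fin n) {j : ℕ} (hj : j + 1 < n) :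
    descent (σ * Fin.cycleRange i) j =
      if (i : ℕ) < j then descent σ j
      else if (i : ℕ) = j then (if cardAt σ (j + 1) < cardAt σ 0 then 1 else 0)
      else if (i : ℕ) = j + 1 then (if cardAt σ 0 < cardAt σ (j + 1) then 1 else 0)
      else descent σ (j + 1) := by
  simp only [descent, cardAt_mul σ _ hj, cardAt_mul σ _ (Nat.lt_of_succ_lt hj),
    val_cycleRange_apply]
  split_ifs <;> first | rfl | omega

theorem descent_mul_botCycle (σ : Equiv.Perm (Fin n)) (i : Fin n) {j : ℕ} (hj : j + 1 < n) :
    descent (σ * botCycle n i) j =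
      if (i : ℕ) < j then descent σ (j - 1)
      else if (i : ℕ) = j then (if cardAt σ j < cardAt σ (n - 1) then 1 else 0)
      else if (i : ℕ) = j + 1 then (if cardAt σ (n - 1) < cardAt σ j then 1 else 0)
      else descent σ j := by
  rcases j with _ | j <;>
  · simp only [descent, cardAt_mul σ _ hj, cardAt_mul σ _ (Nat.lt_of_succ_lt hj),
      val_botCycle_apply, Nat.add_sub_cancel]
    split_ifs <;> first | rfl | omega

theorem sum_descent_mul_cycleRange (σ : Equiv.Perm (Fin n)) {j : ℕ} (hj : j + 1 < n) :
    ∑ i : Fin n, descent (σ * Fin.cycleRange i) j =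
      j * descent σ j + 1 + (n - (j + 2) : ℕ) * descent σ (j + 1) := by
  have hne : cardAt σ (j + 1) ≠ cardAt σ 0 :=
    fun h => absurd (cardAt_injOn σ (Set.mem_Iio.mpr hj) (Set.mem_Iio.mpr (by omega)) h) (by omega)
  simp only [descent_mul_cycleRange σ _ hj]
  rw [Fin.sum_ite_lt_eq_eq_succ _ _ _ _ hj, nsmul_eq_mul, nsmul_eq_mul]
  linear_combination ite_lt_add_ite_lt_of_ne (R := ℝ) hne

theorem sum_descent_mul_botCycle (σ : Equiv.Perm (Fin n)) {j : ℕ} (hj : j + 1 < n) :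
    ∑ i : Fin n, descent (σ * botCycle n i) j =
      j * descent σ (j - 1) + 1 + (n - (j + 2) : ℕ) * descent σ j := by
  have hne : cardAt σ j ≠ cardAt σ (n - 1) :=
    fun h => absurd (cardAt_injOn σ (Set.mem_Iio.mpr (by omega)) (Set.mem_Iio.mpr (by omega)) h)
      (by omega)
  simp only [descent_mul_botCycle σ _ hj]
  rw [Fin.sum_ite_lt_eq_eq_succ _ _ _ _ hj, nsmul_eq_mul, nsmul_eq_mul]
  linear_combination ite_lt_add_ite_lt_of_ne (R := ℝ) hne

end Deck

noncomputable def binomWeight (m : ℕ) (q : ℝ) (j : ℕ) : ℝ :=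
  m.choose j * q ^ j * (1 - q) ^ (m - j)

section BinomWeight

variable (m : ℕ) (q : ℝ)

theorem sum_binomWeight : ∑ j ∈ range (m + 1), binomWeight m q j = 1 := by
  simpa [binomWeight, add_pow, mul_comm, mul_assoc, mul_left_comm] using (add_pow q (1 - q) m).symm

theorem binomWeight_succ (j : ℕ) :
    (1 - q) * (j + 1) * binomWeight m q (j + 1) = q * (m - j) * binomWeight m q j := by
  rcases lt_or_ge j m with h | h
  · have hchoose : (m.choose (j + 1) : ℝ) * (j + 1) = m.choose j * (m - j) := by
      have := congrArg (Nat.cast : ℕ → ℝ) (Nat.choose_succ_right_eq m j)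
      push_cast [Nat.cast_sub h.le] at this
      exact this
    obtain ⟨k, hk⟩ : ∃ k, m - j = k + 1 := ⟨m - j - 1, by omega⟩
    rw [binomWeight, binomWeight, hk, show m - (j + 1) = k by omega]
    linear_combination q ^ (j + 1) * (1 - q) ^ (k + 1) * hchoose
  · have hzero : binomWeight m q (j + 1) = 0 := by
      simp [binomWeight, Nat.choose_eq_zero_of_lt (Nat.lt_succ_of_le h)]
    rw [hzero, mul_zero]
    rcases h.eq_or_lt with rfl | hlt
    · simp
    · simp [binomWeight, Nat.choose_eq_zero_of_lt hlt]

theorem sum_binomWeight_shift (d : ℕ → ℝ) :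
    q * ∑ j ∈ range (m + 1), (m - j) * binomWeight m q j * d (j + 1) =
      (1 - q) * ∑ j ∈ range (m + 1), j * binomWeight m q j * d j := by
  rw [sum_range_succ, sum_range_succ', mul_add, mul_add, mul_sum, mul_sum]
  simp only [sub_self, zero_mul, CharP.cast_eq_zero, mul_zero, add_zero]
  refine sum_congr rfl fun j _ => ?_
  push_cast
  linear_combination -d (j + 1) * binomWeight_succ m q j

end BinomWeight

theorem fdes_eq_sum_binomWeight_mul_descent (m : ℕ) (q : ℝ) (σ : Equiv.Perm (Fin (m + 2))) :
    fdes (m + 2) q σ = ∑ j ∈ range (m + 1), binomWeight m q j * descent σ j := by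
  have hsub : desSet (m + 2) σ ⊆ range (m + 1) := filter_subset _ _
  rw [fdes, ← inter_eq_right.mpr hsub, ← sum_ite_mem]
  refine sum_congr rfl fun j _ => ?_
  simp only [descent, mul_ite, mul_one, mul_zero, mem_desSet_iff, binomWeight, Nat.add_sub_cancel]

theorem fdes_one (n : ℕ) (q : ℝ) : fdes n q 1 = 0 := by
  refine sum_eq_zero fun j hj => absurd (mem_desSet_iff.mp hj) ?_
  unfold cardAt
  split_ifs <;> simp <;> omega

section Shuffle

variable {m : ℕ} (q : ℝ) (σ : Equiv.Perm (Fin (m + 2)))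

theorem sum_fdes_mul_cycleRange :
    ∑ i : Fin (m + 2), fdes (m + 2) q (σ * Fin.cycleRange i) =
      ∑ j ∈ range (m + 1), j * binomWeight m q j * descent σ j + 1 +
        ∑ j ∈ range (m + 1), (m - j) * binomWeight m q j * descent σ (j + 1) := by
  have hcount : ∀ j ∈ range (m + 1),
      binomWeight m q j * ∑ i : Fin (m + 2), descent (σ * Fin.cycleRange i) j =
        j * binomWeight m q j * descent σ j + binomWeight m q j +
          (m - j) * binomWeight m q j * descent σ (j + 1) := fun j hj => by
    have hj := mem_range.mp hj
    rw [sum_descent_mul_cycleRange σ (by omega), Nat.cast_sub (by omega)]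
    push_cast
    ring
  simp only [fdes_eq_sum_binomWeight_mul_descent]
  rw [sum_comm, sum_congr rfl fun j _ => (mul_sum _ _ _).symm, sum_congr rfl hcount,
    sum_add_distrib, sum_add_distrib, sum_binomWeight]

theorem sum_fdes_mul_botCycle :
    ∑ i : Fin (m + 2), fdes (m + 2) q (σ * botCycle (m + 2) i) =
      ∑ j ∈ range (m + 1), j * binomWeight m q j * descent σ (j - 1) + 1 +
        ∑ j ∈ range (m + 1), (m - j) * binomWeight m q j * descent σ j := by
  have hcount : ∀ j ∈ range (m + 1),
      binomWeight m q j * ∑ i : Fin (m + 2), descent (σ * botCycle (m + 2) i) j =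
        j * binomWeight m q j * descent σ (j - 1) + binomWeight m q j +
          (m - j) * binomWeight m q j * descent σ j := fun j hj => by
    have hj := mem_range.mp hj
    rw [sum_descent_mul_botCycle σ (by omega), Nat.cast_sub (by omega)]
    push_cast
    ring
  simp only [fdes_eq_sum_binomWeight_mul_descent]
  rw [sum_comm, sum_congr rfl fun j _ => (mul_sum _ _ _).symm, sum_congr rfl hcount,
    sum_add_distrib, sum_add_distrib, sum_binomWeight]

theorem sum_fdes_shuffle :
    q * ∑ i : Fin (m + 2), fdes (m + 2) q (σ * Fin.cycleRange i) +
      (1 - q) * ∑ i : Fin (m + 2), fdes (m + 2) q (σ * botCycle (m + 2) i) =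
        m * fdes (m + 2) q σ + 1 := by
  have htop := sum_binomWeight_shift m q (descent σ)
  have hbot := sum_binomWeight_shift m q (fun j => descent σ (j - 1))
  simp only [Nat.add_sub_cancel] at hbot
  have hsplit : ∑ j ∈ range (m + 1), j * binomWeight m q j * descent σ j +
      ∑ j ∈ range (m + 1), (m - j) * binomWeight m q j * descent σ j =
        m * fdes (m + 2) q σ := by
    rw [fdes_eq_sum_binomWeight_mul_descent, ← sum_add_distrib, mul_sum]
    exact sum_congr rfl fun j _ => by ring
  rw [sum_fdes_mul_cycleRange, sum_fdes_mul_botCycle]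
  linear_combination htop - hbot + hsplit

end Shuffle

theorem sum_card_fiber_mul {ι α R : Type*} [Fintype ι] [Fintype α] [DecidableEq α]
    [Semiring R] (f : ι → α) (g : α → R) :
    ∑ a, (#{i | a = f i} : R) * g a = ∑ i, g (f i) := by
  simp only [card_filter, Nat.cast_sum, Nat.cast_ite, Nat.cast_one, Nat.cast_zero, sum_mul,
    ite_mul, one_mul, zero_mul]
  rw [sum_comm]
  simp

theorem Pq_mulVec_apply (n : ℕ) (q : ℝ) (v : Equiv.Perm (Fin n) → ℝ)
    (σ : Equiv.Perm (Fin n)) :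
    (Pq n q *ᵥ v) σ = q / n * ∑ i, v (σ * Fin.cycleRange i) +
      (1 - q) / n * ∑ i, v (σ * botCycle n i) := by
  simp only [Matrix.mulVec, dotProduct, Pq, add_mul, sum_add_distrib, mul_assoc, ← mul_sum,
    sum_card_fiber_mul]

theorem Pq_mulVec_one {n : ℕ} (hn : n ≠ 0) (q : ℝ) : Pq n q *ᵥ 1 = 1 := by
  ext σ
  rw [Pq_mulVec_apply]
  simp only [Pi.one_apply, sum_const, card_univ, Fintype.card_fin, nsmul_eq_mul, mul_one]
  field_simp
  ring

theorem Pq_mulVec_fdes (m : ℕ) (q : ℝ) :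
    Pq (m + 2) q *ᵥ fdes (m + 2) q =
      (m / (m + 2) : ℝ) • fdes (m + 2) q + ((1 - m / (m + 2) : ℝ) * (1 / 2)) • 1 := by
  ext σ
  rw [Pq_mulVec_apply, Pi.add_apply, Pi.smul_apply, Pi.smul_apply, Pi.one_apply, smul_eq_mul,
    smul_eq_mul, mul_one]
  have hpos : (m + 2 : ℝ) ≠ 0 := by positivity
  push_cast
  calc q / (m + 2) * ∑ i, fdes (m + 2) q (σ * Fin.cycleRange i) +
        (1 - q) / (m + 2) * ∑ i, fdes (m + 2) q (σ * botCycle (m + 2) i)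
      = (m * fdes (m + 2) q σ + 1) / (m + 2) := by rw [← sum_fdes_shuffle q σ]; ring
    _ = _ := by field_simp; ring

theorem stmt11_general (n : ℕ) (hn : 2 ≤ n) (q : ℝ) (t : ℕ) :
    ((Pq n q) ^ t).mulVec (fdes n q) 1 = (1 - (((n : ℝ) - 2) / n) ^ t) * (1 / 2) := by
  obtain ⟨m, rfl⟩ := Nat.exists_eq_add_of_le' hn
  rw [pow_mulVec_eq_of_mulVec_eq_smul_add (Pq_mulVec_one (by omega) q) (Pq_mulVec_fdes m q) t]
  simp [fdes_one]

/-- Starting from the ascending deck, the expected value of the weighted descent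
statistic after `t` top-or-bottom-to-random shuffles is `(1 - ((n-2)/n)^t)/2`. -/
theorem stmt11 (n : ℕ) (hn : 2 ≤ n) (q : ℝ) (hq : q ∈ Set.Icc (0 : ℝ) 1) (t : ℕ) :
    ((Pq n q) ^ t).mulVec (fdes n q) 1 = (1 - (((n : ℝ) - 2) / n) ^ t) * (1 / 2) :=
  stmt11_general n hn q t
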